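/- Let k ≥ 1 be an integer. For every w ∈ C_c^∞((0,∞)): ∫₀^∞ (L₀ w)(r)² r dr = ∫₀^∞ w''(r)² r dr + (2k² + 1) ∫₀^∞ w'(r)² r^{-1} dr + (k⁴ - 4k²) ∫₀^∞ w(r)² r^{-3} dr, where L₀ w := -w'' - w'/r + (k²/r²) w. -/

import Mathlib

open MeasureTheory Set Filter

private lemma contAux (f : ℝ → ℝ) (hf : Continuous f) {a : ℝ} (ha : 0 < a)
    (h0 : ∀ r, r < a → f r = 0) (m : ℕ) :
    Continuous fun r => f r / r ^ m := by
  rw [continuous_iff_continuousAt]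
  intro x
  rcases lt_or_ge x a with hx | hx
  · have h : (fun r => f r / r ^ m) =ᶠ[nhds x] fun _ => (0:ℝ) := by
      filter_upwards [Iio_mem_nhds hx] with r hr
      simp [h0 r hr]
    exact ContinuousAt.congr continuousAt_const h.symm
  · exact (hf.continuousAt).div ((continuous_pow m).continuousAt)
      (pow_ne_zero m (ne_of_gt (lt_of_lt_of_le ha hx)))

noncomputable section

/-- The free operator `L₀ w = -w'' - w'/r + (k²/r²) w`. -/
def L0op (k : ℕ) (w : ℝ → ℝ) : ℝ → ℝ := fun r =>
  -deriv (deriv w) r - deriv w r / r + (k : ℝ) ^ 2 / r ^ 2 * w r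

private def Gfun (k : ℕ) (w : ℝ → ℝ) : ℝ → ℝ := fun r =>
  deriv w r ^ 2 - 2*(k:ℝ)^2 * (deriv w r * w r / r) - 2*(k:ℝ)^2 * (w r ^ 2 / r ^ 2)

private def Dfun (k : ℕ) (w : ℝ → ℝ) : ℝ → ℝ := fun r =>
  2*deriv (deriv w) r*deriv w r - 2*(k:ℝ)^2*(deriv (deriv w) r*w r)/r
    - 2*(k:ℝ)^2*(deriv w r)^2/r - 2*(k:ℝ)^2*(deriv w r*w r)/r^2
    + 4*(k:ℝ)^2*(w r)^2/r^3

private lemma hasDerivAt_Gfun (k : ℕ) (w : ℝ → ℝ)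
    (dw : Differentiable ℝ w) (dw1 : Differentiable ℝ (deriv w))
    {x : ℝ} (hx : 0 < x) : HasDerivAt (Gfun k w) (Dfun k w x) x := by
  have hx' := hx.ne'
  have h1 : HasDerivAt w (deriv w x) x := (dw x).hasDerivAt
  have h2 : HasDerivAt (deriv w) (deriv (deriv w) x) x := (dw1 x).hasDerivAt
  have hA := h2.pow 2
  have hB := ((h2.mul h1).div (hasDerivAt_id x) hx').const_mul (2*(k:ℝ)^2)
  have hC := ((h1.pow 2).div (hasDerivAt_pow 2 x) (pow_ne_zero 2 hx')).const_mul (2*(k:ℝ)^2)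
  have h := (hA.sub hB).sub hC
  refine h.congr_deriv ?_
  unfold Dfun
  simp only [id, Pi.mul_apply, Pi.pow_apply]
  field_simp
  ring

/-- the exact expansion of `∫ (L₀w)² r dr` for compactly supported
smooth `w` on `(0,∞)`. -/
theorem stmt12 (k : ℕ) (hk : 1 ≤ k) (w : ℝ → ℝ)
    (hw : ContDiff ℝ (⊤ : ℕ∞) w) (hsupp : HasCompactSupport w) (hpos : tsupport w ⊆ Ioi 0) :
    (∫ r in Ioi (0 : ℝ), L0op k w r ^ 2 * r) =
      (∫ r in Ioi (0 : ℝ), (deriv (deriv w) r) ^ 2 * r)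
      + (2 * (k : ℝ) ^ 2 + 1) * (∫ r in Ioi (0 : ℝ), (deriv w r) ^ 2 / r)
      + ((k : ℝ) ^ 4 - 4 * (k : ℝ) ^ 2) * (∫ r in Ioi (0 : ℝ), w r ^ 2 / r ^ 3) := by
  -- basic regularity facts
  have hw' : ContDiff ℝ ((⊤ : ℕ∞) : WithTop ℕ∞) w := hw.of_le (by simp)
  have dw : Differentiable ℝ w := (contDiff_infty_iff_deriv.mp hw').1
  have hwd : ContDiff ℝ ((⊤ : ℕ∞) : WithTop ℕ∞) (deriv w) := (contDiff_infty_iff_deriv.mp hw').2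
  have dw1 : Differentiable ℝ (deriv w) := (contDiff_infty_iff_deriv.mp hwd).1
  have c1 : Continuous (deriv w) := hwd.continuous
  have c2 : Continuous (deriv (deriv w)) := (contDiff_infty_iff_deriv.mp hwd).2.continuous
  -- support facts
  set K := tsupport w with hKdef
  have hK : IsCompact K := hsupp
  have hts1 : tsupport (deriv w) ⊆ K := closure_minimal support_deriv_subset isClosed_closure
  have hz : ∀ r, r ∉ K → w r = 0 ∧ deriv w r = 0 ∧ deriv (deriv w) r = 0 := by
    intro r hr
    refine ⟨image_eq_zero_of_notMem_tsupport hr, image_eq_zero_of_notMem_tsupport (fun h => hr (hts1 h)), ?_⟩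
    exact image_eq_zero_of_notMem_tsupport fun h =>
      hr (hts1 (closure_minimal support_deriv_subset isClosed_closure h))
  rcases K.eq_empty_or_nonempty with hKe | hKne
  · have hw0 : w = 0 := by
      funext r
      exact (hz r (by simp [hKe])).1
    subst hw0
    have h0 : deriv (0 : ℝ → ℝ) = 0 := by funext x; exact deriv_const x 0
    simp [L0op, h0]
  -- nonempty support: get bounds
  have haK : sInf K ∈ K := hK.sInf_mem hKne
  have hbK : sSup K ∈ K := hK.sSup_mem hKne
  set a := sInf K
  set b := sSup K
  have ha : 0 < a := hpos haK
  have hsub : K ⊆ Icc a b := fun x hx => ⟨csInf_le hK.bddBelow hx, le_csSup hK.bddAbove hx⟩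
  have hab : a ≤ b := (hsub haK).2
  have hzlt : ∀ r, r < a → w r = 0 ∧ deriv w r = 0 ∧ deriv (deriv w) r = 0 :=
    fun r hr => hz r (fun h => absurd (hsub h).1 (not_le.mpr hr))
  -- the four integrands
  set g1 : ℝ → ℝ := fun r => (deriv (deriv w) r) ^ 2 * r with hg1def
  set g2 : ℝ → ℝ := fun r => (deriv w r) ^ 2 / r with hg2def
  set g3 : ℝ → ℝ := fun r => w r ^ 2 / r ^ 3 with hg3def
  -- continuity
  have cg1 : Continuous g1 := (c2.pow 2).mul continuous_id
  have cg2 : Continuous g2 := by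
    have := contAux (fun r => (deriv w r) ^ 2) (c1.pow 2) ha
      (fun r hr => by simp [(hzlt r hr).2.1]) 1
    simpa [pow_one] using this
  have cg3 : Continuous g3 :=
    contAux (fun r => w r ^ 2) (hw.continuous.pow 2) ha (fun r hr => by simp [(hzlt r hr).1]) 3
  have cD : Continuous (Dfun k w) := by
    unfold Dfun
    refine (((((continuous_const.mul c2).mul c1)).sub ?_).sub ?_ |>.sub ?_).add ?_
    · simpa [pow_one] using contAux (fun r => 2*(k:ℝ)^2*(deriv (deriv w) r * w r))
        (continuous_const.mul (c2.mul hw.continuous)) ha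
        (fun r hr => by simp [(hzlt r hr).1]) 1
    · simpa [pow_one] using contAux (fun r => 2*(k:ℝ)^2*(deriv w r)^2)
        (continuous_const.mul (c1.pow 2)) ha (fun r hr => by simp [(hzlt r hr).2.1]) 1
    · exact contAux (fun r => 2*(k:ℝ)^2*(deriv w r * w r))
        (continuous_const.mul (c1.mul hw.continuous)) ha
        (fun r hr => by simp [(hzlt r hr).1]) 2
    · exact contAux (fun r => 4*(k:ℝ)^2*(w r)^2)
        (continuous_const.mul (hw.continuous.pow 2)) ha (fun r hr => by simp [(hzlt r hr).1]) 3
  -- zero off K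
  have hD0 : ∀ r, r ∉ K → Dfun k w r = 0 := by
    intro r hr
    obtain ⟨h0, h1, h2⟩ := hz r hr
    simp [Dfun, h0, h1, h2]
  have hg10 : ∀ r, r ∉ K → g1 r = 0 := fun r hr => by simp [hg1def, (hz r hr).2.2]
  have hg20 : ∀ r, r ∉ K → g2 r = 0 := fun r hr => by simp [hg2def, (hz r hr).2.1]
  have hg30 : ∀ r, r ∉ K → g3 r = 0 := fun r hr => by simp [hg3def, (hz r hr).1]
  -- integrability on Ioi 0
  have int1 : IntegrableOn g1 (Ioi 0) :=
    (cg1.integrable_of_hasCompactSupport (HasCompactSupport.intro hK hg10)).integrableOn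
  have int2 : IntegrableOn g2 (Ioi 0) :=
    (cg2.integrable_of_hasCompactSupport (HasCompactSupport.intro hK hg20)).integrableOn
  have int3 : IntegrableOn g3 (Ioi 0) :=
    (cg3.integrable_of_hasCompactSupport (HasCompactSupport.intro hK hg30)).integrableOn
  have intD : IntegrableOn (Dfun k w) (Ioi 0) :=
    (cD.integrable_of_hasCompactSupport (HasCompactSupport.intro hK hD0)).integrableOn
  -- ∫ D = 0
  have hDint : (∫ r in Ioi (0:ℝ), Dfun k w r) = 0 := by
    have hu : (0:ℝ) < a/2 := by linarith
    have hv : b < b + 1 := by linarith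
    have huv : a/2 ≤ b+1 := by linarith
    have hcompl : ∀ r, r ∉ Ioi (0:ℝ) → Dfun k w r = 0 := by
      intro r hr
      exact hD0 r (fun h => hr (hpos h))
    rw [setIntegral_eq_integral_of_forall_compl_eq_zero hcompl]
    have hsup : Function.support (Dfun k w) ⊆ Ioc (a/2) (b+1) := by
      intro r hr
      by_contra hcon
      have hrK : r ∈ K := by
        by_contra hK'
        exact hr (hD0 r hK')
      obtain ⟨h1, h2⟩ := hsub hrK
      simp only [mem_Ioc, not_and_or, not_lt, not_le] at hcon
      rcases hcon with h | h
      · linarith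
      · linarith
    rw [← intervalIntegral.integral_eq_integral_of_support_subset hsup]
    have hder : ∀ x ∈ uIcc (a/2) (b+1), HasDerivAt (Gfun k w) (Dfun k w x) x := by
      intro x hx
      rw [uIcc_of_le huv] at hx
      exact hasDerivAt_Gfun k w dw dw1 (lt_of_lt_of_le hu hx.1)
    rw [intervalIntegral.integral_eq_sub_of_hasDerivAt hder
      (cD.intervalIntegrable _ _)]
    have hGa : Gfun k w (a/2) = 0 := by
      obtain ⟨h0, h1, _⟩ := hzlt (a/2) (by linarith)
      simp [Gfun, h0, h1]
    have hGb : Gfun k w (b+1) = 0 := by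
      obtain ⟨h0, h1, _⟩ := hz (b+1) (fun h => absurd (hsub h).2 (by linarith))
      simp [Gfun, h0, h1]
    rw [hGa, hGb, sub_zero]
  -- pointwise identity on Ioi 0
  have key : ∀ r ∈ Ioi (0:ℝ), L0op k w r ^ 2 * r =
      (g1 r + (2*(k:ℝ)^2+1) * g2 r) + (((k:ℝ)^4 - 4*(k:ℝ)^2) * g3 r + Dfun k w r) := by
    intro r hr
    have hr' : (r:ℝ) ≠ 0 := (mem_Ioi.mp hr).ne'
    simp only [L0op, Dfun, hg1def, hg2def, hg3def]
    field_simp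
    ring
  calc (∫ r in Ioi (0 : ℝ), L0op k w r ^ 2 * r)
      = ∫ r in Ioi (0:ℝ), ((g1 r + (2*(k:ℝ)^2+1) * g2 r)
          + (((k:ℝ)^4 - 4*(k:ℝ)^2) * g3 r + Dfun k w r)) :=
        setIntegral_congr_fun measurableSet_Ioi key
    _ = (∫ r in Ioi (0:ℝ), (g1 r + (2*(k:ℝ)^2+1) * g2 r))
          + ∫ r in Ioi (0:ℝ), (((k:ℝ)^4 - 4*(k:ℝ)^2) * g3 r + Dfun k w r) := by
        exact integral_add (int1.add (int2.const_mul _)) ((int3.const_mul _).add intD)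
    _ = ((∫ r in Ioi (0:ℝ), g1 r) + ∫ r in Ioi (0:ℝ), (2*(k:ℝ)^2+1) * g2 r)
          + ((∫ r in Ioi (0:ℝ), ((k:ℝ)^4 - 4*(k:ℝ)^2) * g3 r)
            + ∫ r in Ioi (0:ℝ), Dfun k w r) := by
        rw [integral_add int1 (int2.const_mul _), integral_add (int3.const_mul _) intD]
    _ = (∫ r in Ioi (0 : ℝ), (deriv (deriv w) r) ^ 2 * r)
      + (2 * (k : ℝ) ^ 2 + 1) * (∫ r in Ioi (0 : ℝ), (deriv w r) ^ 2 / r)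
      + ((k : ℝ) ^ 4 - 4 * (k : ℝ) ^ 2) * (∫ r in Ioi (0 : ℝ), w r ^ 2 / r ^ 3) := by
        rw [integral_const_mul, integral_const_mul, hDint, add_zero, add_assoc]

end
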